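/- Let k ≥ 1, 0 ≤ ν ≤ k-1, Q(x) = ∑_{j=0}^{ν} C(k-1/2+j, j) x^j, R(x) = (1-x)^{k+1/2} Q(x), and g(x) = R(x)² + R(1-x)². Then g is decreasing on [0,1/2] and increasing on [1/2,1], with min_{[0,1]} g = g(1/2) = 2^{-2k-2ν}(∑_{j=0}^{ν} C(k+1/2+ν, j))² > 0 and max_{[0,1]} g = g(0) = g(1) = 1. -/

import Mathlib

open Finset Set

/-- The generalized binomial coefficient `C(t, j) = t(t-1)⋯(t-j+1)/j!` for real `t`. -/
noncomputable def gchoose (t : ℝ) (j : ℕ) : ℝ :=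
  (∏ i ∈ Finset.range j, (t - i)) / (j.factorial : ℝ)

/-!
With `t = k - 1/2`, `Q` is the degree-`ν` partial sum of the binomial series of `(1 - x)^(-(t+1))`.
The recurrence `(j+1) C(t+j+1, j+1) = (t+j+1) C(t+j, j)` makes `R'` telescope (induction on `ν`) to
`R'(x) = -(t+1+ν) C(t+ν, ν) (1-x)^t x^ν ≤ 0`. So `R` decreases from `R 0 = 1` to `R 1 = 0`, and for
`0 < x < 1/2` moreover `R'(x) ≤ R'(1-x)`, since `x^(t-ν) ≤ (1-x)^(t-ν)`. Hence
`g'(x) = 2 (R(x) R'(x) - R(1-x) R'(1-x)) ≤ 0` on `[0, 1/2]`, and `g(1-x) = g(x)` gives the rest.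
Finally `g(1/2) = 2 R(1/2)^2`, evaluated by the Pascal-rule identity
`2^n ∑_{j ≤ n} C(t+j, j) 2^(-j) = ∑_{j ≤ n} C(t+1+n, j)`.
-/

lemma gchoose_zero (t : ℝ) : gchoose t 0 = 1 := by simp [gchoose]

lemma gchoose_pos {t : ℝ} {j : ℕ} (h : (j : ℝ) - 1 < t) : 0 < gchoose t j := by
  refine div_pos (prod_pos fun i hi => ?_) (mod_cast j.factorial_pos)
  have : (i : ℝ) + 1 ≤ j := mod_cast mem_range.mp hi
  linarith

lemma gchoose_succ_succ (t : ℝ) (j : ℕ) :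
    gchoose (t + 1) (j + 1) = gchoose t j + gchoose t (j + 1) := by
  simp only [gchoose, prod_range_succ' (fun i : ℕ => t + 1 - i),
    prod_range_succ (fun i : ℕ => t - i), Nat.factorial_succ]
  push_cast
  field_simp
  ring_nf

lemma succ_mul_gchoose_succ (t : ℝ) (j : ℕ) :
    ((j : ℝ) + 1) * gchoose (t + 1) (j + 1) = (t + 1) * gchoose t j := by
  simp only [gchoose, prod_range_succ' (fun i : ℕ => t + 1 - i), Nat.factorial_succ]
  push_cast
  field_simp
  ring_nf

lemma sum_range_gchoose_succ (t : ℝ) (n : ℕ) :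
    ∑ j ∈ range (n + 2), gchoose (t + 1) j
      = 2 * ∑ j ∈ range (n + 1), gchoose t j + gchoose t (n + 1) := by
  have hshift := sum_range_succ' (gchoose t) (n + 1)
  have hlast := sum_range_succ (gchoose t) (n + 1)
  rw [sum_range_succ', gchoose_zero]
  simp only [gchoose_succ_succ, sum_add_distrib]
  rw [gchoose_zero] at hshift
  linarith

lemma two_pow_mul_sum_gchoose_half (t : ℝ) (n : ℕ) :
    2 ^ n * ∑ j ∈ range (n + 1), gchoose (t + j) j * (1 / 2) ^ j
      = ∑ j ∈ range (n + 1), gchoose (t + 1 + n) j := by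
  induction n with
  | zero => simp [gchoose_zero]
  | succ n ih =>
    rw [sum_range_succ, mul_add, pow_succ, mul_comm _ (2 : ℝ), mul_assoc, ih,
      show t + 1 + ((n + 1 : ℕ) : ℝ) = t + 1 + n + 1 by push_cast; ring, sum_range_gchoose_succ]
    have half : (2 : ℝ) * 2 ^ n * (1 / 2) ^ (n + 1) = 1 := by
      rw [← pow_succ', ← mul_pow]; norm_num
    rw [show t + ((n + 1 : ℕ) : ℝ) = t + 1 + n by push_cast; ring]
    linear_combination gchoose (t + 1 + n) (n + 1) * half

noncomputable def negBinomPartialSum (t : ℝ) (n : ℕ) (x : ℝ) : ℝ :=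
  ∑ j ∈ range (n + 1), gchoose (t + j) j * x ^ j

noncomputable def pseudoSplineR (t : ℝ) (n : ℕ) (x : ℝ) : ℝ :=
  (1 - x) ^ (t + 1) * negBinomPartialSum t n x

lemma negBinomPartialSum_pos {t : ℝ} (ht : -1 < t) (n : ℕ) {x : ℝ} (hx : 0 ≤ x) :
    0 < negBinomPartialSum t n x := by
  refine sum_pos' (fun j _ => mul_nonneg (gchoose_pos ?_).le (pow_nonneg hx j))
    ⟨0, by simp, by simp [gchoose_zero]⟩
  linarith

lemma pseudoSplineR_zero (t : ℝ) (n : ℕ) : pseudoSplineR t n 0 = 1 := by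
  simp [pseudoSplineR, negBinomPartialSum, sum_range_succ', gchoose_zero]

lemma pseudoSplineR_one {t : ℝ} (ht : t + 1 ≠ 0) (n : ℕ) : pseudoSplineR t n 1 = 0 := by
  simp [pseudoSplineR, Real.zero_rpow ht]

lemma pseudoSplineR_pos {t : ℝ} (ht : -1 < t) (n : ℕ) {x : ℝ} (hx₀ : 0 ≤ x) (hx₁ : x < 1) :
    0 < pseudoSplineR t n x :=
  mul_pos (Real.rpow_pos_of_pos (by linarith) _) (negBinomPartialSum_pos ht n hx₀)

lemma continuous_pseudoSplineR {t : ℝ} (ht : 0 ≤ t + 1) (n : ℕ) :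
    Continuous (pseudoSplineR t n) := by
  unfold pseudoSplineR negBinomPartialSum
  fun_prop (disch := exact fun _ => Or.inr ht)

lemma two_pow_mul_pseudoSplineR_half (t : ℝ) (n : ℕ) :
    2 ^ n * pseudoSplineR t n (1 / 2)
      = (1 / 2) ^ (t + 1) * ∑ j ∈ range (n + 1), gchoose (t + 1 + n) j := by
  rw [pseudoSplineR, negBinomPartialSum, mul_left_comm, two_pow_mul_sum_gchoose_half]
  norm_num

lemma hasDerivAt_pseudoSplineR (t : ℝ) (n : ℕ) {x : ℝ} (hx : x < 1) :
    HasDerivAt (pseudoSplineR t n)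
      (-((t + 1 + n) * gchoose (t + n) n) * ((1 - x) ^ t * x ^ n)) x := by
  have hpow : HasDerivAt (fun y : ℝ => (1 - y) ^ (t + 1)) (-((t + 1) * (1 - x) ^ t)) x := by
    have h1x : (1 : ℝ) - x ≠ 0 := by linarith
    have h := ((hasDerivAt_id' x).const_sub 1).rpow_const (p := t + 1) (Or.inl h1x)
    rw [add_sub_cancel_right] at h
    exact h.congr_deriv (by ring)
  induction n with
  | zero =>
    have : pseudoSplineR t 0 = fun y => (1 - y) ^ (t + 1) := by
      funext y; simp [pseudoSplineR, negBinomPartialSum, gchoose_zero]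
    rw [this]; convert hpow using 1; simp [gchoose_zero]; ring
  | succ n ih =>
    set c := gchoose (t + (n + 1 : ℕ)) (n + 1)
    have hsplit : pseudoSplineR t (n + 1)
        = fun y => pseudoSplineR t n y + c * ((1 - y) ^ (t + 1) * y ^ (n + 1)) := by
      funext y; simp only [pseudoSplineR, negBinomPartialSum, sum_range_succ, c]; ring
    rw [hsplit]
    refine (ih.add ((hpow.mul (hasDerivAt_pow (n + 1) x)).const_mul c)).congr_deriv ?_
    have hrec : ((n : ℝ) + 1) * c = (t + n + 1) * gchoose (t + n) n := by
      simpa [c, add_assoc] using succ_mul_gchoose_succ (t + n) n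
    rw [Real.rpow_add_one (by linarith : 1 - x ≠ 0)]
    push_cast
    linear_combination x ^ n * (1 - x) ^ t * hrec

lemma rpow_mul_pow_le_rpow_mul_pow {x y a : ℝ} {n : ℕ} (hx : 0 < x) (hxy : x ≤ y)
    (hn : (n : ℝ) ≤ a) :
    x ^ a * y ^ n ≤ y ^ a * x ^ n := by
  have hsplit : ∀ z : ℝ, 0 < z → z ^ a = z ^ (a - n) * z ^ n := fun z hz => by
    rw [← Real.rpow_add_natCast hz.ne', sub_add_cancel]
  have hy : 0 < y := hx.trans_le hxy
  rw [hsplit x hx, hsplit y hy, mul_right_comm]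
  gcongr

lemma hasDerivAt_sq_add_sq_one_sub {R R' : ℝ → ℝ} {x : ℝ} (hx : HasDerivAt R (R' x) x)
    (h1x : HasDerivAt R (R' (1 - x)) (1 - x)) :
    HasDerivAt (fun x => R x ^ 2 + R (1 - x) ^ 2) (2 * (R x * R' x - R (1 - x) * R' (1 - x))) x := by
  have hsub : HasDerivAt (fun y : ℝ => 1 - y) (-1) x := by
    simpa using (hasDerivAt_id x).const_sub 1
  refine ((hx.pow 2).add ((h1x.comp x hsub).pow 2)).congr_deriv ?_
  simp only [Function.comp]
  ring

lemma antitoneOn_sq_add_sq_one_sub {R R' : ℝ → ℝ} (hR : ContinuousOn R (Icc 0 1))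
    (hderiv : ∀ x ∈ Ioo (0 : ℝ) 1, HasDerivAt R (R' x) x)
    (hR'_nonpos : ∀ x ∈ Ioo (0 : ℝ) 1, R' x ≤ 0)
    (hR'_le : ∀ x ∈ Ioo (0 : ℝ) (1 / 2), R' x ≤ R' (1 - x)) (hR₁ : 0 ≤ R 1) :
    AntitoneOn (fun x => R x ^ 2 + R (1 - x) ^ 2) (Icc 0 (1 / 2)) := by
  have hanti : AntitoneOn R (Icc 0 1) := by
    refine antitoneOn_of_deriv_nonpos (convex_Icc 0 1) hR (fun x hx => ?_) fun x hx => ?_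
    all_goals rw [interior_Icc] at hx
    · exact (hderiv x hx).differentiableAt.differentiableWithinAt
    · rw [(hderiv x hx).deriv]; exact hR'_nonpos x hx
  have hdiff : ∀ x ∈ Ioo (0 : ℝ) 1, HasDerivAt (fun x => R x ^ 2 + R (1 - x) ^ 2)
      (2 * (R x * R' x - R (1 - x) * R' (1 - x))) x := fun x hx =>
    hasDerivAt_sq_add_sq_one_sub (hderiv x hx) (hderiv _ ⟨by linarith [hx.2], by linarith [hx.1]⟩)
  have hcont : ContinuousOn (fun x => R x ^ 2 + R (1 - x) ^ 2) (Icc 0 (1 / 2)) := by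
    have hsub : MapsTo (fun x : ℝ => 1 - x) (Icc 0 (1 / 2)) (Icc 0 1) := fun x hx =>
      ⟨by linarith [hx.2], by linarith [hx.1]⟩
    have hR_half : ContinuousOn R (Icc 0 (1 / 2)) := hR.mono (Icc_subset_Icc_right (by norm_num))
    exact (hR_half.pow 2).add ((hR.comp (continuousOn_const.sub continuousOn_id) hsub).pow 2)
  refine antitoneOn_of_deriv_nonpos (convex_Icc 0 (1 / 2)) hcont (fun x hx => ?_) fun x hx => ?_
  all_goals
    rw [interior_Icc] at hx
    have hx1 : x ∈ Ioo (0 : ℝ) 1 := ⟨hx.1, by linarith [hx.2]⟩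
  · exact (hdiff x hx1).differentiableAt.differentiableWithinAt
  rw [(hdiff x hx1).deriv]
  have hmem : ∀ y ∈ Ioo (0 : ℝ) 1, y ∈ Icc (0 : ℝ) 1 := fun y hy => Ioo_subset_Icc_self hy
  have h1x : 1 - x ∈ Ioo (0 : ℝ) 1 := ⟨by linarith [hx1.2], by linarith [hx1.1]⟩
  have hRle : R (1 - x) ≤ R x := hanti (hmem x hx1) (hmem _ h1x) (by linarith [hx.2])
  have hR1x : 0 ≤ R (1 - x) := hR₁.trans (hanti (hmem _ h1x) ⟨zero_le_one, le_rfl⟩ h1x.2.le)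
  nlinarith [hR'_le x hx, hR'_nonpos _ h1x, hR'_nonpos x hx1]

lemma antitoneOn_pseudoSplineR_sq_add_sq {t : ℝ} {n : ℕ} (hn : (n : ℝ) ≤ t) :
    AntitoneOn (fun x => pseudoSplineR t n x ^ 2 + pseudoSplineR t n (1 - x) ^ 2)
      (Icc 0 (1 / 2)) := by
  have ht : -1 < t := by linarith [(Nat.cast_nonneg n : (0 : ℝ) ≤ n)]
  have hK : 0 ≤ (t + 1 + n) * gchoose (t + n) n :=
    mul_nonneg (by linarith) (gchoose_pos (by linarith)).le
  refine antitoneOn_sq_add_sq_one_sub (continuous_pseudoSplineR (by linarith) n).continuousOn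
    (fun x hx => hasDerivAt_pseudoSplineR t n hx.2) (fun x hx => ?_) (fun x hx => ?_)
    (pseudoSplineR_one (by linarith) n).ge
  · have : 0 ≤ (1 - x) ^ t * x ^ n :=
      mul_nonneg (Real.rpow_nonneg (by linarith [hx.2]) t) (pow_nonneg hx.1.le n)
    nlinarith
  · rw [sub_sub_cancel, neg_mul, neg_mul, neg_le_neg_iff]
    exact mul_le_mul_of_nonneg_left
      (rpow_mul_pow_le_rpow_mul_pow hx.1 (by linarith [hx.2]) hn) hK

lemma monotoneOn_of_one_sub_symm {g : ℝ → ℝ} (hsym : ∀ x, g (1 - x) = g x)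
    (hg : AntitoneOn g (Icc 0 (1 / 2))) : MonotoneOn g (Icc (1 / 2) 1) := fun a ha b hb hab => by
  rw [← hsym a, ← hsym b]
  exact hg ⟨by linarith [hb.2], by linarith [hb.1]⟩ ⟨by linarith [ha.2], by linarith [ha.1]⟩
    (by linarith)

lemma mem_Icc_of_one_sub_symm {g : ℝ → ℝ} (hsym : ∀ x, g (1 - x) = g x)
    (hg : AntitoneOn g (Icc 0 (1 / 2))) {x : ℝ} (hx : x ∈ Icc (0 : ℝ) 1) :
    g x ∈ Icc (g (1 / 2)) (g 0) := by
  obtain ⟨y, hy, hgy⟩ : ∃ y ∈ Icc (0 : ℝ) (1 / 2), g y = g x := by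
    rcases le_total x (1 / 2) with h | h
    · exact ⟨x, ⟨hx.1, h⟩, rfl⟩
    · exact ⟨1 - x, ⟨by linarith [hx.2], by linarith⟩, hsym x⟩
  rw [← hgy]
  exact ⟨hg hy ⟨by norm_num, le_rfl⟩ hy.2, hg ⟨le_rfl, by norm_num⟩ hy hy.1⟩

lemma two_mul_sq_pseudoSplineR_half (k n : ℕ) :
    2 * pseudoSplineR (k - 1 / 2) n (1 / 2) ^ 2
      = (2 : ℝ) ^ (-(2 * (k : ℤ)) - 2 * (n : ℤ)) *
        (∑ j ∈ range (n + 1), gchoose ((k : ℝ) + 1 / 2 + n) j) ^ 2 := by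
  have h := two_pow_mul_pseudoSplineR_half ((k : ℝ) - 1 / 2) n
  rw [show (k : ℝ) - 1 / 2 + 1 = k + 1 / 2 by ring] at h
  have hhalf : ((1 / 2 : ℝ) ^ ((k : ℝ) + 1 / 2)) ^ 2 = (1 / 2) ^ (2 * k + 1) := by
    rw [← Real.rpow_natCast, ← Real.rpow_mul (by norm_num), ← Real.rpow_natCast]
    push_cast; ring_nf
  have hsq := congrArg (· ^ 2) h
  simp only [mul_pow, hhalf] at hsq
  have hz : (2 : ℝ) ^ (-(2 * (k : ℤ)) - 2 * (n : ℤ)) * 2 ^ (2 * k + 2 * n) = 1 := by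
    rw [← zpow_natCast, ← zpow_add₀ two_ne_zero]; push_cast; ring_nf; exact zpow_zero 2
  have hinv : (1 / 2 : ℝ) ^ (2 * k + 1) * 2 ^ (2 * k + 1) = 1 := by rw [← mul_pow]; norm_num
  set Z := (2 : ℝ) ^ (-(2 * (k : ℤ)) - 2 * (n : ℤ))
  set S := ∑ j ∈ range (n + 1), gchoose ((k : ℝ) + 1 / 2 + n) j
  linear_combination (-2 * pseudoSplineR (k - 1 / 2) n (1 / 2) ^ 2) * hz
    + (Z * 2 ^ (2 * k + 1)) * hsq + (Z * S ^ 2) * hinv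

/-- Properties of `R(x) = (1-x)^{k+1/2} Q(x)` and `g(x) = R(x)² + R(1-x)²` for the
dual pseudo-spline masks: monotonicity of `g` and its minimum and maximum on `[0,1]`. -/
theorem dual_pseudo_spline_extrema (k ν : ℕ) (hk : 1 ≤ k) (hν : ν ≤ k - 1)
    (Q R g : ℝ → ℝ)
    (hQ : ∀ x : ℝ, Q x = ∑ j ∈ range (ν + 1), gchoose ((k:ℝ) - 1/2 + j) j * x ^ j)
    (hR : ∀ x : ℝ, R x = (1 - x) ^ ((k:ℝ) + 1/2) * Q x)
    (hg : ∀ x : ℝ, g x = R x ^ 2 + R (1 - x) ^ 2) :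
    AntitoneOn g (Icc 0 (1/2)) ∧
    MonotoneOn g (Icc (1/2) 1) ∧
    (∀ x ∈ Icc (0:ℝ) 1, g (1/2) ≤ g x) ∧
    g (1/2) = (2:ℝ) ^ (-(2 * (k:ℤ)) - 2 * (ν:ℤ)) *
        (∑ j ∈ range (ν + 1), gchoose ((k:ℝ) + 1/2 + ν) j) ^ 2 ∧
    0 < g (1/2) ∧
    (∀ x ∈ Icc (0:ℝ) 1, g x ≤ 1) ∧
    g 0 = 1 ∧ g 1 = 1 := by
  have hνt : (ν : ℝ) ≤ k - 1 / 2 := by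
    have : (ν : ℝ) + 1 ≤ k := mod_cast (by omega : ν + 1 ≤ k)
    linarith
  have hRdef : R = pseudoSplineR (k - 1 / 2) ν := funext fun x => by
    rw [hR, hQ, pseudoSplineR, negBinomPartialSum, show (k : ℝ) - 1 / 2 + 1 = k + 1 / 2 by ring]
  have hgdef : g = fun x =>
      pseudoSplineR (k - 1 / 2) ν x ^ 2 + pseudoSplineR (k - 1 / 2) ν (1 - x) ^ 2 :=
    funext fun x => by rw [hg, hRdef]
  have hsym : ∀ x, g (1 - x) = g x := fun x => by rw [hg, hg, sub_sub_cancel, add_comm]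
  have hanti : AntitoneOn g (Icc 0 (1 / 2)) := hgdef ▸ antitoneOn_pseudoSplineR_sq_add_sq hνt
  have hbounds := fun x (hx : x ∈ Icc (0 : ℝ) 1) => mem_Icc_of_one_sub_symm hsym hanti hx
  have hg0 : g 0 = 1 := by
    rw [hg, hRdef, sub_zero, pseudoSplineR_zero, pseudoSplineR_one (by linarith)]; norm_num
  have hhalf : g (1 / 2) = 2 * pseudoSplineR (k - 1 / 2) ν (1 / 2) ^ 2 := by
    rw [hg, hRdef, show (1 : ℝ) - 1 / 2 = 1 / 2 by norm_num]; ring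
  have hRhalf : 0 < pseudoSplineR (k - 1 / 2) ν (1 / 2) :=
    pseudoSplineR_pos (by linarith) ν (by norm_num) (by norm_num)
  refine ⟨hanti, monotoneOn_of_one_sub_symm hsym hanti, fun x hx => (hbounds x hx).1,
    hhalf.trans (two_mul_sq_pseudoSplineR_half k ν), hhalf ▸ by positivity,
    fun x hx => hg0 ▸ (hbounds x hx).2, hg0, by simpa using (hsym 0).trans hg0⟩
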